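/- arXiv:2202.05767 — 2 statements merged into one kernel-verified Lean document; each statement's English description precedes it below -/
import Mathlib

section
/- Let c(γ) = (1/√π) e^{-γ²} + γ erf(γ) + (1/γ - γ) erf(γ/√2) - √(2/π) e^{-γ²/2} for γ > 0. Then lim_{γ → ∞} γ · c(γ) = 1. -/
open Filter

lemma aux_decay (n : ℕ) : Tendsto (fun x : ℝ => x ^ n * Real.exp (-(x ^ 2 / 2))) atTop (nhds 0) := by
  apply squeeze_zero_norm' (a := fun x : ℝ => x ^ n * Real.exp (-x))
  · filter_upwards [eventually_ge_atTop (2 : ℝ)] with x hx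
    have hx0 : (0:ℝ) ≤ x := by linarith
    have h1 : x ≤ x ^ 2 / 2 := by nlinarith
    have h2 : Real.exp (-(x ^ 2 / 2)) ≤ Real.exp (-x) := Real.exp_le_exp.mpr (by linarith)
    have : ‖x ^ n * Real.exp (-(x ^ 2 / 2))‖ = x ^ n * Real.exp (-(x ^ 2 / 2)) := by
      rw [Real.norm_eq_abs, abs_of_nonneg]
      positivity
    rw [this]
    exact mul_le_mul_of_nonneg_left h2 (by positivity)
  · exact Real.tendsto_pow_mul_exp_neg_atTop_nhds_zero n

theorem stmt_12
    (erf : ℝ → ℝ)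
    (herf : ∀ y : ℝ, erf y = (2 / Real.sqrt Real.pi) * ∫ s in (0:ℝ)..y, Real.exp (-s^2))
    (c : ℝ → ℝ)
    (hc : ∀ γ : ℝ, 0 < γ → c γ =
      (1 / Real.sqrt Real.pi) * Real.exp (-γ^2) + γ * erf γ
      + (1/γ - γ) * erf (γ / Real.sqrt 2)
      - Real.sqrt (2 / Real.pi) * Real.exp (-γ^2 / 2)) :
    Tendsto (fun γ : ℝ => γ * c γ) atTop (nhds 1) := by
  have hπ : (0:ℝ) < Real.sqrt Real.pi := Real.sqrt_pos.mpr Real.pi_pos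
  have h2 : (0:ℝ) < Real.sqrt 2 := Real.sqrt_pos.mpr two_pos
  have hcont : Continuous (fun s : ℝ => Real.exp (-s ^ 2)) := by continuity
  -- g tendsto
  have hI : MeasureTheory.IntegrableOn (fun s : ℝ => Real.exp (-s ^ 2)) (Set.Ioi 0) := by
    have := (integrable_exp_neg_mul_sq (b := 1) one_pos).integrableOn (s := Set.Ioi 0)
    simpa using this
  have hval : (∫ s in Set.Ioi (0:ℝ), Real.exp (-s ^ 2)) = Real.sqrt Real.pi / 2 := by
    have := integral_gaussian_Ioi 1
    simpa using this
  have hg : Tendsto (fun y : ℝ => ∫ s in (0:ℝ)..y, Real.exp (-s ^ 2)) atTop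
      (nhds (Real.sqrt Real.pi / 2)) := by
    have h := MeasureTheory.intervalIntegral_tendsto_integral_Ioi 0 hI tendsto_id
    rwa [hval] at h
  have herf_lim : Tendsto erf atTop (nhds 1) := by
    have : Tendsto (fun y : ℝ => (2 / Real.sqrt Real.pi) * ∫ s in (0:ℝ)..y, Real.exp (-s ^ 2))
        atTop (nhds ((2 / Real.sqrt Real.pi) * (Real.sqrt Real.pi / 2))) := hg.const_mul _
    have heq : (2 / Real.sqrt Real.pi) * (Real.sqrt Real.pi / 2) = 1 := by
      field_simp
    rw [heq] at this
    exact this.congr (fun y => (herf y).symm)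
  have hdivtop : Tendsto (fun γ : ℝ => γ / Real.sqrt 2) atTop atTop :=
    tendsto_id.atTop_div_const h2
  have hterm2 : Tendsto (fun γ : ℝ => erf (γ / Real.sqrt 2)) atTop (nhds 1) :=
    herf_lim.comp hdivtop
  -- term1 : γ² (erf γ - erf (γ/√2)) → 0
  have hterm1 : Tendsto (fun γ : ℝ => γ ^ 2 * (erf γ - erf (γ / Real.sqrt 2))) atTop (nhds 0) := by
    apply squeeze_zero_norm'
      (a := fun γ : ℝ => (2 / Real.sqrt Real.pi) * (γ ^ 3 * Real.exp (-(γ ^ 2 / 2))))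
    · filter_upwards [eventually_gt_atTop (0 : ℝ)] with γ hγ
      have hle : γ / Real.sqrt 2 ≤ γ := by
        rw [div_le_iff₀ h2]
        nlinarith [Real.sq_sqrt (by norm_num : (2:ℝ) ≥ 0), Real.sqrt_nonneg 2]
      have hint : erf γ - erf (γ / Real.sqrt 2)
          = (2 / Real.sqrt Real.pi) * ∫ s in (γ / Real.sqrt 2)..γ, Real.exp (-s ^ 2) := by
        rw [herf, herf, ← mul_sub]
        congr 1
        exact intervalIntegral.integral_interval_sub_left
          (hcont.intervalIntegrable _ _) (hcont.intervalIntegrable _ _)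
      have hbound : ‖∫ s in (γ / Real.sqrt 2)..γ, Real.exp (-s ^ 2)‖
          ≤ Real.exp (-(γ ^ 2 / 2)) * |γ - γ / Real.sqrt 2| := by
        apply intervalIntegral.norm_integral_le_of_norm_le_const
        intro x hx
        rw [Set.uIoc_of_le hle] at hx
        have hx1 : γ / Real.sqrt 2 < x := hx.1
        have hxx : γ ^ 2 / 2 ≤ x ^ 2 := by
          have : (γ / Real.sqrt 2) ^ 2 = γ ^ 2 / 2 := by
            rw [div_pow, Real.sq_sqrt (by norm_num : (0:ℝ) ≤ 2)]
          rw [← this]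
          have h0 : 0 ≤ γ / Real.sqrt 2 := by positivity
          nlinarith
        rw [Real.norm_eq_abs, abs_of_pos (Real.exp_pos _)]
        exact Real.exp_le_exp.mpr (by linarith)
      have habs : |γ - γ / Real.sqrt 2| ≤ γ := by
        rw [abs_of_nonneg (by linarith)]
        have : 0 ≤ γ / Real.sqrt 2 := by positivity
        linarith
      calc ‖γ ^ 2 * (erf γ - erf (γ / Real.sqrt 2))‖
          = γ ^ 2 * ((2 / Real.sqrt Real.pi) *
              ‖∫ s in (γ / Real.sqrt 2)..γ, Real.exp (-s ^ 2)‖) := by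
            rw [hint, norm_mul, norm_mul]
            rw [Real.norm_eq_abs (γ^2), abs_of_nonneg (by positivity),
              Real.norm_eq_abs (2 / Real.sqrt Real.pi), abs_of_nonneg (by positivity)]
        _ ≤ γ ^ 2 * ((2 / Real.sqrt Real.pi) * (Real.exp (-(γ ^ 2 / 2)) * γ)) := by
            apply mul_le_mul_of_nonneg_left _ (by positivity)
            apply mul_le_mul_of_nonneg_left _ (by positivity)
            calc ‖∫ s in (γ / Real.sqrt 2)..γ, Real.exp (-s ^ 2)‖
                ≤ Real.exp (-(γ ^ 2 / 2)) * |γ - γ / Real.sqrt 2| := hbound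
              _ ≤ Real.exp (-(γ ^ 2 / 2)) * γ :=
                  mul_le_mul_of_nonneg_left habs (by positivity)
        _ = (2 / Real.sqrt Real.pi) * (γ ^ 3 * Real.exp (-(γ ^ 2 / 2))) := by ring
    · have := (aux_decay 3).const_mul (2 / Real.sqrt Real.pi)
      simpa using this
  -- term3 : γ/√π * e^{-γ²} → 0
  have hterm3 : Tendsto (fun γ : ℝ => γ * ((1 / Real.sqrt Real.pi) * Real.exp (-γ ^ 2)))
      atTop (nhds 0) := by
    apply squeeze_zero_norm'
      (a := fun γ : ℝ => (1 / Real.sqrt Real.pi) * (γ ^ 1 * Real.exp (-(γ ^ 2 / 2))))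
    · filter_upwards [eventually_ge_atTop (0 : ℝ)] with γ hγ
      have hee : Real.exp (-γ ^ 2) ≤ Real.exp (-(γ ^ 2 / 2)) :=
        Real.exp_le_exp.mpr (by nlinarith)
      rw [Real.norm_eq_abs, abs_of_nonneg (by positivity), pow_one]
      calc γ * ((1 / Real.sqrt Real.pi) * Real.exp (-γ ^ 2))
          ≤ γ * ((1 / Real.sqrt Real.pi) * Real.exp (-(γ ^ 2 / 2))) := by
            apply mul_le_mul_of_nonneg_left _ hγ
            exact mul_le_mul_of_nonneg_left hee (by positivity)
        _ = (1 / Real.sqrt Real.pi) * (γ * Real.exp (-(γ ^ 2 / 2))) := by ring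
    · have := (aux_decay 1).const_mul (1 / Real.sqrt Real.pi)
      simpa using this
  -- term4 : γ * √(2/π) e^{-γ²/2} → 0
  have hterm4 : Tendsto (fun γ : ℝ => γ * (Real.sqrt (2 / Real.pi) * Real.exp (-γ ^ 2 / 2)))
      atTop (nhds 0) := by
    apply squeeze_zero_norm'
      (a := fun γ : ℝ => Real.sqrt (2 / Real.pi) * (γ ^ 1 * Real.exp (-(γ ^ 2 / 2))))
    · filter_upwards [eventually_ge_atTop (0 : ℝ)] with γ hγ
      rw [Real.norm_eq_abs, abs_of_nonneg (by positivity), pow_one]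
      have h : -γ ^ 2 / 2 = -(γ ^ 2 / 2) := by ring
      rw [h]
      exact le_of_eq (by ring)
    · have := (aux_decay 1).const_mul (Real.sqrt (2 / Real.pi))
      simpa using this
  -- combine
  have hmain : Tendsto (fun γ : ℝ =>
      γ ^ 2 * (erf γ - erf (γ / Real.sqrt 2)) + erf (γ / Real.sqrt 2)
      + γ * ((1 / Real.sqrt Real.pi) * Real.exp (-γ ^ 2))
      - γ * (Real.sqrt (2 / Real.pi) * Real.exp (-γ ^ 2 / 2))) atTop (nhds 1) := by
    have := ((hterm1.add hterm2).add hterm3).sub hterm4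
    simpa using this
  apply hmain.congr'
  filter_upwards [eventually_gt_atTop (0 : ℝ)] with γ hγ
  rw [hc γ hγ]
  field_simp
  ring
end

section
/- Let c̄(γ) = (1/γ - γ) erf(γ/√2) - √(2/π) e^{-γ²/2} + γ for γ > 0. Then c̄ is bounded on (0, ∞); in particular c̄(γ) ≤ 1 for all γ > 0. -/
/-!
With `t = γ / √2` one has `c̄(γ) = erf t / γ + γ (1 - erf t) - √(2/π) e^{-t²}`. The first two terms
are nonnegative (as `0 ≤ erf t ≤ 1`) and the last lies in `[-√(2/π), 0]`. Since `e^{-s²} ≤ 1`,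
`erf t ≤ 2t/√π`, so the first term is at most `√(2/π)`; the tail bound
`∫_t^∞ e^{-s²} ds ≤ e^{-t²}/(2t)`, from `e^{-s²} ≤ (s/t) e^{-s²}` on `s ≥ t`, shows that the second
term is at most the modulus of the third. Hence `|c̄| ≤ √(2/π) < 1`.
-/

open MeasureTheory Real Set Filter

lemma integrable_exp_neg_sq : Integrable fun x : ℝ => exp (-x ^ 2) := by
  simpa using integrable_exp_neg_mul_sq one_pos

lemma integral_Ioi_mul_exp_neg_sq (t : ℝ) :
    ∫ x in Ioi t, x * exp (-x ^ 2) = exp (-t ^ 2) / 2 := by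
  have hderiv : ∀ x ∈ Ici t, HasDerivAt (fun x : ℝ => -exp (-x ^ 2) / 2) (x * exp (-x ^ 2)) x := by
    intro x _
    refine (((hasDerivAt_pow 2 x).fun_neg.exp).fun_neg.div_const 2).congr_deriv ?_
    simp
    ring
  have hint : IntegrableOn (fun x : ℝ => x * exp (-x ^ 2)) (Ioi t) := by
    simpa using (integrable_mul_exp_neg_mul_sq one_pos).integrableOn
  have hlim : Tendsto (fun x : ℝ => -exp (-x ^ 2) / 2) atTop (nhds 0) := by
    have := (tendsto_exp_atBot.comp (tendsto_neg_atTop_atBot.comp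
      (tendsto_pow_atTop two_ne_zero))).neg.div_const 2
    simpa using this
  rw [integral_Ioi_of_hasDerivAt_of_tendsto' hderiv hint hlim]
  ring

lemma integral_Ioi_exp_neg_sq_le {t : ℝ} (ht : 0 < t) :
    ∫ x in Ioi t, exp (-x ^ 2) ≤ exp (-t ^ 2) / (2 * t) := by
  have hint : IntegrableOn (fun x : ℝ => x * exp (-x ^ 2)) (Ioi t) := by
    simpa using (integrable_mul_exp_neg_mul_sq one_pos).integrableOn
  calc ∫ x in Ioi t, exp (-x ^ 2) ≤ ∫ x in Ioi t, x * exp (-x ^ 2) / t := by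
        refine setIntegral_mono_on integrable_exp_neg_sq.integrableOn (hint.div_const t)
          measurableSet_Ioi fun x hx => ?_
        rw [le_div_iff₀ ht, mul_comm (exp _)]
        exact mul_le_mul_of_nonneg_right (le_of_lt hx) (exp_pos _).le
    _ = exp (-t ^ 2) / (2 * t) := by
        rw [integral_div, integral_Ioi_mul_exp_neg_sq, div_div]

lemma integral_exp_neg_sq_add_integral_Ioi (t : ℝ) :
    (∫ x in (0 : ℝ)..t, exp (-x ^ 2)) + ∫ x in Ioi t, exp (-x ^ 2) = √π / 2 := by
  rw [intervalIntegral.integral_interval_add_Ioi integrable_exp_neg_sq.integrableOn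
    integrable_exp_neg_sq.integrableOn]
  simpa using integral_gaussian_Ioi 1

lemma integral_exp_neg_sq_le {t : ℝ} (ht : 0 ≤ t) : ∫ x in (0 : ℝ)..t, exp (-x ^ 2) ≤ t := by
  calc ∫ x in (0 : ℝ)..t, exp (-x ^ 2) ≤ ∫ _ in (0 : ℝ)..t, (1 : ℝ) :=
        intervalIntegral.integral_mono_on ht integrable_exp_neg_sq.intervalIntegrable
          intervalIntegrable_const fun x _ => exp_le_one_iff.mpr (by nlinarith)
    _ = t := by simp

noncomputable def gaussErf (y : ℝ) : ℝ := 2 / √π * ∫ s in (0 : ℝ)..y, exp (-s ^ 2)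

lemma gaussErf_nonneg {t : ℝ} (ht : 0 ≤ t) : 0 ≤ gaussErf t :=
  mul_nonneg (by positivity) (intervalIntegral.integral_nonneg ht fun _ _ => (exp_pos _).le)

lemma gaussErf_le_mul {t : ℝ} (ht : 0 ≤ t) : gaussErf t ≤ 2 / √π * t :=
  mul_le_mul_of_nonneg_left (integral_exp_neg_sq_le ht) (by positivity)

lemma one_sub_gaussErf_eq (t : ℝ) : 1 - gaussErf t = 2 / √π * ∫ x in Ioi t, exp (-x ^ 2) := by
  rw [gaussErf, eq_sub_of_add_eq' (integral_exp_neg_sq_add_integral_Ioi t)]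
  field_simp

lemma gaussErf_le_one (t : ℝ) : gaussErf t ≤ 1 := by
  rw [← sub_nonneg, one_sub_gaussErf_eq]
  exact mul_nonneg (by positivity) (setIntegral_nonneg measurableSet_Ioi fun _ _ => (exp_pos _).le)

lemma one_sub_gaussErf_le {t : ℝ} (ht : 0 < t) : 1 - gaussErf t ≤ exp (-t ^ 2) / (√π * t) := by
  calc 1 - gaussErf t ≤ 2 / √π * (exp (-t ^ 2) / (2 * t)) := by
        rw [one_sub_gaussErf_eq]
        exact mul_le_mul_of_nonneg_left (integral_Ioi_exp_neg_sq_le ht) (by positivity)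
    _ = exp (-t ^ 2) / (√π * t) := by field_simp

lemma sqrt_two_div_pi_le_one : √(2 / π) ≤ 1 :=
  sqrt_le_one.mpr ((div_le_one pi_pos).mpr (by linarith [pi_gt_three]))

lemma sq_div_sqrt_two (γ : ℝ) : (γ / √2) ^ 2 = γ ^ 2 / 2 := by
  rw [div_pow, sq_sqrt zero_le_two]

section cBar

variable {γ : ℝ}

lemma gaussErf_div_le (hγ : 0 < γ) : gaussErf (γ / √2) / γ ≤ √(2 / π) := by
  calc gaussErf (γ / √2) / γ ≤ 2 / √π * (γ / √2) / γ := by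
        gcongr
        exact gaussErf_le_mul (by positivity)
    _ = √(2 / π) := by
        rw [sqrt_div' _ pi_pos.le]
        field_simp
        rw [sq_sqrt zero_le_two]

lemma mul_one_sub_gaussErf_le (hγ : 0 < γ) :
    γ * (1 - gaussErf (γ / √2)) ≤ √(2 / π) * exp (-γ ^ 2 / 2) := by
  calc γ * (1 - gaussErf (γ / √2)) ≤ γ * (exp (-(γ / √2) ^ 2) / (√π * (γ / √2))) := by
        gcongr
        exact one_sub_gaussErf_le (by positivity)
    _ = √(2 / π) * exp (-γ ^ 2 / 2) := by
        rw [sq_div_sqrt_two, sqrt_div' _ pi_pos.le, neg_div]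
        field_simp

noncomputable def cBar (γ : ℝ) : ℝ :=
  (1 / γ - γ) * gaussErf (γ / √2) - √(2 / π) * exp (-γ ^ 2 / 2) + γ

lemma cBar_eq (hγ : 0 < γ) : cBar γ =
    gaussErf (γ / √2) / γ + γ * (1 - gaussErf (γ / √2)) - √(2 / π) * exp (-γ ^ 2 / 2) := by
  rw [cBar]
  field_simp
  ring

lemma cBar_le (hγ : 0 < γ) : cBar γ ≤ √(2 / π) := by
  rw [cBar_eq hγ]
  linarith [gaussErf_div_le hγ, mul_one_sub_gaussErf_le hγ]

lemma neg_le_cBar (hγ : 0 < γ) : -√(2 / π) ≤ cBar γ := by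
  have herf_div : 0 ≤ gaussErf (γ / √2) / γ := div_nonneg (gaussErf_nonneg (by positivity)) hγ.le
  have htail : 0 ≤ γ * (1 - gaussErf (γ / √2)) :=
    mul_nonneg hγ.le (sub_nonneg.mpr (gaussErf_le_one _))
  have hexp : √(2 / π) * exp (-γ ^ 2 / 2) ≤ √(2 / π) :=
    mul_le_of_le_one_right (sqrt_nonneg _) (exp_le_one_iff.mpr (by nlinarith))
  rw [cBar_eq hγ]
  linarith

lemma abs_cBar_le (hγ : 0 < γ) : |cBar γ| ≤ √(2 / π) :=
  abs_le.mpr ⟨neg_le_cBar hγ, cBar_le hγ⟩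

end cBar

theorem stmt_14
    (erf : ℝ → ℝ)
    (herf : ∀ y : ℝ, erf y = (2 / Real.sqrt Real.pi) * ∫ s in (0:ℝ)..y, Real.exp (-s^2))
    (cbar : ℝ → ℝ)
    (hc : ∀ γ : ℝ, 0 < γ → cbar γ =
      (1/γ - γ) * erf (γ / Real.sqrt 2)
      - Real.sqrt (2 / Real.pi) * Real.exp (-γ^2 / 2) + γ) :
    (∃ M : ℝ, ∀ γ : ℝ, 0 < γ → |cbar γ| ≤ M) ∧
    (∀ γ : ℝ, 0 < γ → cbar γ ≤ 1) := by
  have herf' : erf = gaussErf := funext herf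
  have hbound : ∀ γ : ℝ, 0 < γ → |cbar γ| ≤ 1 := fun γ hγ => by
    rw [hc γ hγ, herf']
    exact (abs_cBar_le hγ).trans sqrt_two_div_pi_le_one
  exact ⟨⟨1, hbound⟩, fun γ hγ => (le_abs_self _).trans (hbound γ hγ)⟩
end
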